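/- arXiv:1408.2559 — 2 statements merged into one kernel-verified Lean document; each statement's English description precedes it below -/
import Mathlib

section
/- Let U be a finite set, let 𝓐 be a collection of subsets of U, and let 𝓣 ⊆ 𝓐. Suppose (i) there is a set T₀ ∈ 𝓣 with |T₀| = N₀ such that every subset of T₀ belongs to 𝓣, and (ii) there are sets C₁,…,C_M ⊆ U, each of size at most N₁, such that every member of 𝓐 \ 𝓣 is a subset of some C_i. Then for every integer m with 0 ≤ m ≤ N₀, the number of members of 𝓐 \ 𝓣 of size exactly m is at most M·binom(N₁,m), while the number of members of 𝓣 of size exactly m is at least binom(N₀,m); consequently, the proportion of members of 𝓐 of size exactly m that lie in 𝓐 \ 𝓣 is at most M·(N₁/N₀)^m. -/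
/-!
Every non-trivial member of size `m` is an `m`-subset of one of the `M` sets `Cᵢ`, so there are at
most `M · C(N₁, m)` of them, while the `C(N₀, m)` subsets of `T₀` of size `m` are all trivial. The
proportion is therefore at most `M · C(N₁, m) / C(N₀, m)`, and `C(N₁, m) / C(N₀, m) ≤ (N₁ / N₀)^m`
for `N₁ ≤ N₀` because this holds factor by factor in `N₁ ⋯ (N₁ - m + 1) / N₀ ⋯ (N₀ - m + 1)`.
When `N₁ > N₀` the bound is at least `1` as soon as there is a non-trivial member at all.
-/

open Finset

namespace Nat

theorem descFactorial_mul_pow_le_pow_mul_descFactorial {a b : ℕ} (m : ℕ) (h : a ≤ b) :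
    a.descFactorial m * b ^ m ≤ a ^ m * b.descFactorial m := by
  rw [descFactorial_eq_prod_range, descFactorial_eq_prod_range, pow_eq_prod_const b,
    pow_eq_prod_const a, ← prod_mul_distrib, ← prod_mul_distrib]
  refine prod_le_prod' fun i _ => ?_
  calc (a - i) * b = a * b - i * b := Nat.sub_mul a i b
    _ ≤ a * b - a * i := Nat.sub_le_sub_left (by rw [mul_comm a]; exact Nat.mul_le_mul_left i h) _
    _ = a * (b - i) := (Nat.mul_sub a b i).symm

theorem choose_mul_pow_le_pow_mul_choose {a b : ℕ} (m : ℕ) (h : a ≤ b) :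
    a.choose m * b ^ m ≤ a ^ m * b.choose m := by
  refine Nat.le_of_mul_le_mul_left ?_ m.factorial_pos
  calc m.factorial * (a.choose m * b ^ m) = a.descFactorial m * b ^ m := by
        rw [descFactorial_eq_factorial_mul_choose, mul_assoc]
    _ ≤ a ^ m * b.descFactorial m := descFactorial_mul_pow_le_pow_mul_descFactorial m h
    _ = m.factorial * (a ^ m * b.choose m) := by
        rw [descFactorial_eq_factorial_mul_choose, mul_left_comm]

theorem cast_choose_div_cast_choose_le {a b m : ℕ} (hab : a ≤ b) (hm : m ≤ b) :
    (a.choose m : ℝ) / b.choose m ≤ ((a : ℝ) / b) ^ m := by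
  rcases m.eq_zero_or_pos with rfl | hm₀
  · simp
  have hb : (0 : ℝ) < b := by exact_mod_cast hm₀.trans_le hm
  rw [div_pow, div_le_div_iff₀ (by exact_mod_cast choose_pos hm) (by positivity)]
  exact_mod_cast choose_mul_pow_le_pow_mul_choose m hab

end Nat

section Families

variable {α : Type*}

theorem card_filter_card_eq_le_of_forall_subset [DecidableEq α] {ι : Type*} [Fintype ι] {𝓑 : Finset (Finset α)}
    {C : ι → Finset α} {n : ℕ} (hC : ∀ i, #(C i) ≤ n) (hcover : ∀ A ∈ 𝓑, ∃ i, A ⊆ C i) (m : ℕ) :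
    #{A ∈ 𝓑 | #A = m} ≤ Fintype.card ι * n.choose m := by
  have hsub : {A ∈ 𝓑 | #A = m} ⊆ univ.biUnion fun i => (C i).powersetCard m := by
    intro A hA
    obtain ⟨hA𝓑, hAm⟩ := mem_filter.1 hA
    obtain ⟨i, hi⟩ := hcover A hA𝓑
    exact mem_biUnion.2 ⟨i, mem_univ i, mem_powersetCard.2 ⟨hi, hAm⟩⟩
  refine (card_le_card hsub).trans (card_biUnion_le_card_mul _ _ _ fun i _ => ?_)
  rw [card_powersetCard]
  exact Nat.choose_le_choose m (hC i)

theorem choose_card_le_card_filter_card_eq {𝓣 : Finset (Finset α)} {T : Finset α}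
    (hdown : ∀ S ⊆ T, S ∈ 𝓣) (m : ℕ) : (#T).choose m ≤ #{A ∈ 𝓣 | #A = m} := by
  rw [← card_powersetCard]
  refine card_le_card fun S hS => ?_
  obtain ⟨hST, hSm⟩ := mem_powersetCard.1 hS
  exact mem_filter.2 ⟨hdown S hST, hSm⟩

theorem card_filter_sdiff_add_card_filter [DecidableEq α] {𝓐 𝓣 : Finset (Finset α)} (h : 𝓣 ⊆ 𝓐)
    (p : Finset α → Prop) [DecidablePred p] :
    #((𝓐 \ 𝓣).filter p) + #(𝓣.filter p) = #(𝓐.filter p) := by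
  rw [← card_union_of_disjoint (disjoint_filter_filter sdiff_disjoint), ← filter_union,
    sdiff_union_of_subset h]

end Families

theorem proportion_le_mul_div_pow {x t M N₀ N₁ m : ℕ} (hm : m ≤ N₀)
    (hx : x ≤ M * N₁.choose m) (ht : N₀.choose m ≤ t) :
    (x : ℝ) / (x + t) ≤ M * ((N₁ : ℝ) / N₀) ^ m := by
  have ht₀ : (0 : ℝ) < t := by exact_mod_cast (Nat.choose_pos hm).trans_le ht
  rcases le_total N₁ N₀ with hN | hN
  · calc (x : ℝ) / (x + t) ≤ x / t := div_le_div_of_nonneg_left (by positivity) ht₀ (by simp)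
      _ ≤ M * N₁.choose m / N₀.choose m :=
          div_le_div₀ (by positivity) (by exact_mod_cast hx)
            (by exact_mod_cast Nat.choose_pos hm) (by exact_mod_cast ht)
      _ = M * ((N₁.choose m : ℝ) / N₀.choose m) := mul_div_assoc _ _ _
      _ ≤ M * ((N₁ : ℝ) / N₀) ^ m := by gcongr; exact Nat.cast_choose_div_cast_choose_le hN hm
  · rcases x.eq_zero_or_pos with rfl | hx₀
    · simp only [CharP.cast_eq_zero, zero_div]
      positivity
    have hM : (1 : ℝ) ≤ M := by
      exact_mod_cast Nat.one_le_iff_ne_zero.2 fun hM => by simp [hM] at hx; omega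
    have hratio : (1 : ℝ) ≤ ((N₁ : ℝ) / N₀) ^ m := by
      rcases m.eq_zero_or_pos with rfl | hm₀
      · simp
      have hN₀ : (0 : ℝ) < N₀ := by exact_mod_cast hm₀.trans_le hm
      exact one_le_pow₀ ((one_le_div hN₀).2 (by exact_mod_cast hN))
    calc (x : ℝ) / (x + t) ≤ 1 := div_le_one_of_le₀ (by simp) (by positivity)
      _ ≤ M * ((N₁ : ℝ) / N₀) ^ m := one_le_mul_of_one_le_of_one_le hM hratio

theorem enumeration_lemma_fixed_size_general {α : Type*} [DecidableEq α]
    (𝓐 𝓣 : Finset (Finset α)) (h𝓣𝓐 : 𝓣 ⊆ 𝓐)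
    (N₀ N₁ M : ℕ) (T₀ : Finset α) (hT₀card : T₀.card = N₀)
    (hdown : ∀ S : Finset α, S ⊆ T₀ → S ∈ 𝓣)
    (C : Fin M → Finset α) (hC : ∀ i, (C i).card ≤ N₁)
    (hcover : ∀ A ∈ 𝓐 \ 𝓣, ∃ i, A ⊆ C i)
    (m : ℕ) (hm : m ≤ N₀) :
    ((𝓐 \ 𝓣).filter (fun A => A.card = m)).card ≤ M * N₁.choose m ∧
    N₀.choose m ≤ (𝓣.filter (fun A => A.card = m)).card ∧
    (((𝓐 \ 𝓣).filter (fun A => A.card = m)).card : ℝ) /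
        ((𝓐.filter (fun A => A.card = m)).card : ℝ) ≤
      (M : ℝ) * ((N₁ : ℝ) / (N₀ : ℝ)) ^ m := by
  have hnontrivial : #{A ∈ 𝓐 \ 𝓣 | #A = m} ≤ M * N₁.choose m := by
    simpa using card_filter_card_eq_le_of_forall_subset hC hcover m
  have htrivial : N₀.choose m ≤ #{A ∈ 𝓣 | #A = m} :=
    hT₀card ▸ choose_card_le_card_filter_card_eq hdown m
  refine ⟨hnontrivial, htrivial, ?_⟩
  rw [← card_filter_sdiff_add_card_filter h𝓣𝓐, Nat.cast_add]
  exact proportion_le_mul_div_pow hm hnontrivial htrivial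

theorem enumeration_lemma_fixed_size {α : Type*} [Fintype α] [DecidableEq α]
    (𝓐 𝓣 : Finset (Finset α)) (h𝓣𝓐 : 𝓣 ⊆ 𝓐)
    (N₀ N₁ M : ℕ) (T₀ : Finset α) (hT₀ : T₀ ∈ 𝓣) (hT₀card : T₀.card = N₀)
    (hdown : ∀ S : Finset α, S ⊆ T₀ → S ∈ 𝓣)
    (C : Fin M → Finset α) (hC : ∀ i, (C i).card ≤ N₁)
    (hcover : ∀ A ∈ 𝓐 \ 𝓣, ∃ i, A ⊆ C i)
    (m : ℕ) (hm : m ≤ N₀) :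
    ((𝓐 \ 𝓣).filter (fun A => A.card = m)).card ≤ M * N₁.choose m ∧
    N₀.choose m ≤ (𝓣.filter (fun A => A.card = m)).card ∧
    (((𝓐 \ 𝓣).filter (fun A => A.card = m)).card : ℝ) /
        ((𝓐.filter (fun A => A.card = m)).card : ℝ) ≤
      (M : ℝ) * ((N₁ : ℝ) / (N₀ : ℝ)) ^ m :=
  enumeration_lemma_fixed_size_general 𝓐 𝓣 h𝓣𝓐 N₀ N₁ M T₀ hT₀card hdown C hC hcover m hm
end

section
/- For all integers n > k > t ≥ 1, the number of maximal t-intersecting k-uniform hypergraphs on [n] is at most Σ_{i=0}^{binom(2(k−t)+1,k−t)} binom(binom(n,k), i), which is at most binom(n,k)^{binom(2(k−t)+1,k−t)}. -/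
/-!
A maximal `t`-intersecting family `H` consists of all `k`-sets that `t`-intersect every member of
a generating subfamily `S ⊆ H` of minimum size, so `H` is determined by `S` and it suffices to
bound `|S|`. Minimality gives for every `g ∈ S` a `k`-set `e_g` with `|g ∩ e_g| < t` and
`|f ∩ e_g| ≥ t` for the other `f ∈ S`. Such pairs are bounded by Lovász's exterior-algebra
method: with `r = k - t + 1`, a `k`-set `A ⊆ [n]` becomes the `r`-dimensional space of
polynomials `∏_{a ∉ A} (X - a) * q` with `deg q < r`, and two such spaces meet nontrivially
exactly when the sets share at least `t` points. A generic linear map into `K^{2r}` keeps these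
incidences; if `U_g`, `V_g` are the images of the spaces of `g` and `e_g`, the forms
`C ↦ det [U_g; C]` and `C ↦ det [V_g; C]` are linearly independent alternating `r`-forms on
`K^{2r}`, so `2 |S| ≤ C(2r, r) = 2 C(2(k - t) + 1, k - t)`.
-/

/-- A family of edges forms a `k`-uniform hypergraph on `[n]`. -/
def IsKUniform (n k : ℕ) (H : Finset (Finset (Fin n))) : Prop :=
  ∀ e ∈ H, e.card = k

/-- A hypergraph is `t`-intersecting if any two of its edges share at least `t` vertices. -/
def IsTIntersectingHyp (n t : ℕ) (H : Finset (Finset (Fin n))) : Prop :=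
  ∀ e ∈ H, ∀ f ∈ H, t ≤ (e ∩ f).card

/-- A `t`-intersecting `k`-uniform hypergraph is maximal if it is not properly
contained in any other `t`-intersecting `k`-uniform hypergraph on `[n]`. -/
def IsMaximalTIntersectingHyp (n k t : ℕ) (H : Finset (Finset (Fin n))) : Prop :=
  IsKUniform n k H ∧ IsTIntersectingHyp n t H ∧
    ∀ H' : Finset (Finset (Fin n)), IsKUniform n k H' → IsTIntersectingHyp n t H' →
      H ⊆ H' → H = H'

open Finset Module Polynomial Lagrange Submodule

section Compression

variable {K V V' : Type*} [Field K] [AddCommGroup V] [Module K V] [AddCommGroup V'] [Module K V']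

theorem exists_injective_linearMap_of_finrank_le [FiniteDimensional K V] [FiniteDimensional K V']
    (h : finrank K V ≤ finrank K V') : ∃ f : V →ₗ[K] V', Function.Injective f :=
  ⟨(finBasis K V).constr K (finBasis K V' ∘ Fin.castLE h),
    (finBasis K V).injective_constr_of_linearIndependent
      ((finBasis K V').linearIndependent.comp _ (Fin.castLE_injective h))⟩

theorem exists_forall_notMem_of_ne_top [Infinite K] {ι : Type*} [Finite ι]
    (W : ι → Submodule K V) (h : ∀ i, W i ≠ ⊤) : ∃ z, ∀ i, z ∉ W i := by
  have := Fintype.ofFinite ι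
  obtain ⟨z, -, hz⟩ := Set.exists_of_ssubset <|
    Submodule.iUnion_ssubset_of_forall_ne_top_of_card_lt Finset.univ W h
      (by simp [ENat.card_eq_top_of_infinite])
  exact ⟨z, by simpa using hz⟩

variable [Infinite K] [FiniteDimensional K V'] {ι : Type*} [Finite ι]

theorem exists_linearMap_disjoint_ker_of_finiteDimensional [FiniteDimensional K V]
    (W : ι → Submodule K V) (hW : ∀ i, finrank K (W i) ≤ finrank K V') :
    ∃ f : V →ₗ[K] V', ∀ i, Disjoint (W i) (LinearMap.ker f) := by
  obtain ⟨m, hm⟩ : ∃ m, finrank K V = m := ⟨_, rfl⟩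
  induction m using Nat.strong_induction_on generalizing V with
  | _ m ih =>
  by_cases hle : m ≤ finrank K V'
  · obtain ⟨f, hf⟩ := exists_injective_linearMap_of_finrank_le (hm ▸ hle : finrank K V ≤ _)
    exact ⟨f, fun i => by simp [LinearMap.ker_eq_bot.2 hf]⟩
  have hWtop : ∀ i, W i ≠ ⊤ := fun i hi => by
    have := hW i
    rw [hi, finrank_top] at this
    omega
  have : Nontrivial V := Module.nontrivial_of_finrank_pos (R := K) (by omega)
  -- quotient by a line missing every `W i`
  obtain ⟨z, hz⟩ := exists_forall_notMem_of_ne_top (fun o : Option ι => o.elim ⊥ W)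
    (fun o => by cases o <;> simp [hWtop])
  have hz0 : z ≠ 0 := by simpa using hz none
  have hQ : finrank K (V ⧸ K ∙ z) = m - 1 := by
    rw [Submodule.finrank_quotient, finrank_span_singleton hz0, hm]
  obtain ⟨g, hg⟩ := ih (m - 1) (by omega) (fun i => (W i).map (K ∙ z).mkQ)
    (fun i => (finrank_map_le _ _).trans (hW i)) hQ
  refine ⟨g ∘ₗ (K ∙ z).mkQ, fun i => LinearMap.disjoint_ker.2 fun x hx hgx => ?_⟩
  have hx0 : (K ∙ z).mkQ x = 0 := LinearMap.disjoint_ker.1 (hg i) _ (mem_map_of_mem hx) hgx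
  obtain ⟨c, rfl⟩ := mem_span_singleton.1 ((Quotient.mk_eq_zero _).1 hx0)
  by_contra hc
  exact hz (some i) ((W i).smul_mem_iff (left_ne_zero_of_smul hc) |>.1 hx)

theorem exists_linearMap_disjoint_ker (W : ι → Submodule K V) [∀ i, FiniteDimensional K (W i)]
    (hW : ∀ i, finrank K (W i) ≤ finrank K V') :
    ∃ f : V →ₗ[K] V', ∀ i, Disjoint (W i) (LinearMap.ker f) := by
  set P := ⨆ i, W i
  obtain ⟨f, hf⟩ := exists_linearMap_disjoint_ker_of_finiteDimensional (V' := V')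
    (fun i => (W i).comap P.subtype)
    (fun i => by rw [(comapSubtypeEquivOfLe (le_iSup W i)).finrank_eq]; exact hW i)
  obtain ⟨g, hg⟩ := LinearMap.exists_extend f
  refine ⟨g, fun i => LinearMap.disjoint_ker.2 fun x hx hgx => ?_⟩
  have hxP : x ∈ P := le_iSup W i hx
  have hfx : f ⟨x, hxP⟩ = 0 := by rw [← hg]; exact hgx
  exact congrArg Subtype.val (LinearMap.disjoint_ker.1 (hf i) ⟨x, hxP⟩ hx hfx)

end Compression

section DisjointKer

variable {K V V' : Type*} [Field K] [AddCommGroup V] [Module K V] [AddCommGroup V'] [Module K V']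
  {f : V →ₗ[K] V'} {p q : Submodule K V}

theorem finrank_map_of_disjoint_ker (h : Disjoint p (LinearMap.ker f)) :
    finrank K (p.map f) = finrank K p := by
  rw [← LinearMap.range_domRestrict,
    LinearMap.finrank_range_of_inj (LinearMap.injective_domRestrict_iff.2 h)]

theorem disjoint_map_of_disjoint_ker (h : Disjoint (p ⊔ q) (LinearMap.ker f))
    (hpq : Disjoint p q) : Disjoint (p.map f) (q.map f) := by
  rw [Submodule.disjoint_def]
  rintro _ ⟨a, ha, rfl⟩ ⟨b, hb, hba⟩
  have hab : a - b = 0 := LinearMap.disjoint_ker.1 h _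
    (sub_mem (Submodule.mem_sup_left ha) (Submodule.mem_sup_right hb)) (by simp [hba])
  rw [sub_eq_zero] at hab
  subst hab
  simp [Submodule.disjoint_def.1 hpq a ha hb]

theorem not_disjoint_map_of_disjoint_ker (h : Disjoint p (LinearMap.ker f))
    (hpq : ¬Disjoint p q) : ¬Disjoint (p.map f) (q.map f) := by
  rw [Submodule.disjoint_def] at hpq ⊢
  push Not at hpq ⊢
  obtain ⟨x, hxp, hxq, hx0⟩ := hpq
  exact ⟨f x, Submodule.mem_map_of_mem hxp, Submodule.mem_map_of_mem hxq,
    fun hfx => hx0 (LinearMap.disjoint_ker.1 h x hxp hfx)⟩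

end DisjointKer

section DetPairing

variable {K : Type*} [Field K] {r : ℕ}

noncomputable def detPairing (A : Fin r → Fin r ⊕ Fin r → K) :
    (Fin r ⊕ Fin r → K) [⋀^Fin r]→ₗ[K] K where
  toMultilinearMap :=
    (Matrix.detRowAlternating (R := K) (n := Fin r ⊕ Fin r)).toMultilinearMap.currySum A
  map_eq_zero_of_eq' C i j h hij := by
    show Matrix.det (Matrix.of (Sum.elim A C)) = 0
    exact Matrix.det_zero_of_row_eq (i := Sum.inr i) (j := Sum.inr j) (by simpa using hij) h

theorem detPairing_apply (A C : Fin r → Fin r ⊕ Fin r → K) :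
    detPairing A C = (Matrix.of (Sum.elim A C)).det := rfl

theorem detPairing_ne_zero_iff {A C : Fin r → Fin r ⊕ Fin r → K} (hA : LinearIndependent K A)
    (hC : LinearIndependent K C) :
    detPairing A C ≠ 0 ↔ Disjoint (span K (Set.range A)) (span K (Set.range C)) := by
  rw [detPairing_apply, ← isUnit_iff_ne_zero, ← Matrix.isUnit_iff_isUnit_det,
    ← Matrix.linearIndependent_rows_iff_isUnit]
  simp [linearIndependent_sum, hA, hC]

instance {M : Type*} [AddCommGroup M] [Module K M] [FiniteDimensional K M] :
    Module.Finite K (M [⋀^Fin r]→ₗ[K] K) :=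
  Module.Finite.equiv exteriorPower.alternatingMapLinearEquiv.symm

theorem finrank_alternatingMap (M : Type*) [AddCommGroup M] [Module K M] [FiniteDimensional K M] :
    finrank K (M [⋀^Fin r]→ₗ[K] K) = (finrank K M).choose r := by
  rw [exteriorPower.alternatingMapLinearEquiv.finrank_eq, finrank_linearMap_self,
    exteriorPower.finrank_eq]

theorem exists_linearIndependent_span_eq {M : Type*} [AddCommGroup M] [Module K M]
    [FiniteDimensional K M] {W : Submodule K M} (hW : finrank K W = r) :
    ∃ A : Fin r → M, LinearIndependent K A ∧ span K (Set.range A) = W := by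
  let b := finBasisOfFinrankEq K W hW
  refine ⟨W.subtype ∘ b, b.linearIndependent.map' _ W.ker_subtype, ?_⟩
  rw [Set.range_comp, ← map_span, b.span_eq, Submodule.map_top, range_subtype]

theorem linearIndependent_detPairing {ι : Type*} [Fintype ι]
    (u v : ι → Fin r → Fin r ⊕ Fin r → K) (huu : ∀ i j, detPairing (u i) (u j) = 0)
    (huv : ∀ i j, detPairing (u i) (v j) = 0 ↔ i ≠ j)
    (hvu : ∀ i j, detPairing (v i) (u j) = 0 ↔ i ≠ j) :
    LinearIndependent K (Sum.elim (detPairing ∘ u) (detPairing ∘ v)) := by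
  apply LinearIndependent.of_comp (AlternatingMap.toMultilinearMapLM (S := K))
  rw [Fintype.linearIndependent_iff]
  intro g hg
  have heval : ∀ C, ∑ i, g (.inl i) * detPairing (u i) C +
      ∑ i, g (.inr i) * detPairing (v i) C = 0 := fun C => by
    simpa [_root_.sum_apply, Fintype.sum_sum_type] using congrArg (· C) hg
  -- evaluating at `u p`, then at `v p`, isolates one coefficient at a time
  have hinr : ∀ p, g (.inr p) = 0 := fun p => by
    have := heval (u p)
    simp only [huu, mul_zero, sum_const_zero, zero_add] at this
    rw [sum_eq_single p (fun i _ hip => by rw [(hvu i p).2 hip, mul_zero]) (by simp)] at this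
    exact (mul_eq_zero.1 this).resolve_right fun h => (hvu p p).1 h rfl
  have hinl : ∀ p, g (.inl p) = 0 := fun p => by
    have := heval (v p)
    simp only [hinr, zero_mul, sum_const_zero, add_zero] at this
    rw [sum_eq_single p (fun i _ hip => by rw [(huv i p).2 hip, mul_zero]) (by simp)] at this
    exact (mul_eq_zero.1 this).resolve_right fun h => (huv p p).1 h rfl
  rintro (p | p)
  exacts [hinl p, hinr p]

theorem two_mul_card_le_choose_of_disjoint_pairs_pi {ι : Type*} [Fintype ι] (hr : 0 < r)
    (U V : ι → Submodule K (Fin r ⊕ Fin r → K))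
    (hU : ∀ i, finrank K (U i) = r) (hV : ∀ i, finrank K (V i) = r)
    (hUV : ∀ i j, Disjoint (U i) (V j) ↔ i = j)
    (hUU : ∀ i j, i ≠ j → ¬Disjoint (U i) (U j)) :
    2 * Fintype.card ι ≤ (r + r).choose r := by
  choose u hu using fun i => exists_linearIndependent_span_eq (hU i)
  choose v hv using fun i => exists_linearIndependent_span_eq (hV i)
  have hdet {A C : Fin r → Fin r ⊕ Fin r → K} {W W' : Submodule K (Fin r ⊕ Fin r → K)}
      (hA : LinearIndependent K A ∧ span K (Set.range A) = W)
      (hC : LinearIndependent K C ∧ span K (Set.range C) = W') :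
      detPairing A C = 0 ↔ ¬Disjoint W W' := by
    rw [← hA.2, ← hC.2, ← detPairing_ne_zero_iff hA.1 hC.1, not_not]
  have hUU' (i j) : ¬Disjoint (U i) (U j) := by
    rcases eq_or_ne i j with rfl | hij
    · rw [disjoint_self]
      intro h
      have := hU i
      rw [h, finrank_bot] at this
      omega
    · exact hUU i j hij
  have hli := linearIndependent_detPairing u v (fun i j => (hdet (hu i) (hu j)).2 (hUU' i j))
    (fun i j => by rw [hdet (hu i) (hv j), hUV])
    (fun i j => by rw [hdet (hv i) (hu j), disjoint_comm, hUV, eq_comm])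
  have := hli.fintype_card_le_finrank
  rw [Fintype.card_sum, finrank_alternatingMap, finrank_fintype_fun_eq_card, Fintype.card_sum,
    Fintype.card_fin] at this
  omega

end DetPairing

theorem two_mul_card_le_choose_of_disjoint_pairs {K E : Type*} [Field K] [Infinite K]
    [AddCommGroup E] [Module K E] {r : ℕ} {ι : Type*} [Fintype ι] (hr : 0 < r)
    (U V : ι → Submodule K E)
    (hU : ∀ i, finrank K (U i) = r) (hV : ∀ i, finrank K (V i) = r)
    (hUV : ∀ i j, Disjoint (U i) (V j) ↔ i = j)
    (hUU : ∀ i j, i ≠ j → ¬Disjoint (U i) (U j)) :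
    2 * Fintype.card ι ≤ (r + r).choose r := by
  have := fun i => Module.finite_of_finrank_pos (R := K) (M := U i) ((hU i).symm ▸ hr)
  have := fun i => Module.finite_of_finrank_pos (R := K) (M := V i) ((hV i).symm ▸ hr)
  have hdim (i) : finrank K ↥(U i ⊔ V i) ≤ finrank K (Fin r ⊕ Fin r → K) := by
    have := Submodule.finrank_add_le_finrank_add_finrank (U i) (V i)
    rw [hU i, hV i] at this
    simpa using this
  obtain ⟨f, hf⟩ := exists_linearMap_disjoint_ker (fun i => U i ⊔ V i) hdim
  have hfU : ∀ i, Disjoint (U i) (LinearMap.ker f) := fun i => (hf i).mono_left le_sup_left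
  have hfV : ∀ i, Disjoint (V i) (LinearMap.ker f) := fun i => (hf i).mono_left le_sup_right
  refine two_mul_card_le_choose_of_disjoint_pairs_pi hr (fun i => (U i).map f)
    (fun i => (V i).map f) (fun i => (finrank_map_of_disjoint_ker (hfU i)).trans (hU i))
    (fun i => (finrank_map_of_disjoint_ker (hfV i)).trans (hV i)) (fun i j => ⟨fun h => ?_, ?_⟩)
    (fun i j hij => not_disjoint_map_of_disjoint_ker (hfU i) (hUU i j hij))
  · by_contra hij
    exact not_disjoint_map_of_disjoint_ker (hfU i) (mt (hUV i j).1 hij) h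
  · rintro rfl
    exact disjoint_map_of_disjoint_ker (hf i) ((hUV i i).2 rfl)

section NodalSubspace

variable {K α : Type*} [Field K]

theorem isCoprime_nodal {x : α → K} (hx : Function.Injective x) {S T : Finset α}
    (h : Disjoint S T) : IsCoprime (nodal S x) (nodal T x) :=
  IsCoprime.prod_left fun _ ha => IsCoprime.prod_right fun _ hb =>
    pairwise_coprime_X_sub_C hx (ne_of_mem_of_not_mem ha (disjoint_right.1 h hb))

theorem nodal_dvd_nodal {S T : Finset α} (x : α → K) (h : S ⊆ T) : nodal S x ∣ nodal T x :=
  prod_dvd_prod_of_subset _ _ _ h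

variable [Fintype α] [DecidableEq α] (x : α → K)

noncomputable def nodalSubspace (r : ℕ) (S : Finset α) : Submodule K K[X] :=
  (degreeLT K r).map (LinearMap.mulLeft K (nodal Sᶜ x))

variable {x}

theorem mem_nodalSubspace {r : ℕ} {S : Finset α} {p : K[X]} :
    p ∈ nodalSubspace x r S ↔ ∃ q, q.degree < (r : WithBot ℕ) ∧ nodal Sᶜ x * q = p := by
  simp [nodalSubspace, mem_degreeLT]

theorem finrank_nodalSubspace (r : ℕ) (S : Finset α) : finrank K (nodalSubspace x r S) = r := by
  rw [nodalSubspace,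
    ← (Submodule.equivMapOfInjective _ (mul_right_injective₀ nodal_ne_zero) _).finrank_eq,
    (degreeLTEquiv K r).finrank_eq, finrank_fin_fun]

theorem nodal_compl_inter_mem_nodalSubspace {k t r : ℕ} {S : Finset α} (T : Finset α)
    (hS : #S = k) (hr : k < t + r) (h : t ≤ #(S ∩ T)) :
    nodal (S ∩ T)ᶜ x ∈ nodalSubspace x r S := by
  have hST : #(S ∩ T) + #(S \ T) = k := by rw [card_inter_add_card_sdiff, hS]
  refine mem_nodalSubspace.2 ⟨nodal (S \ T) x, ?_, ?_⟩
  · rw [degree_nodal]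
    exact_mod_cast (by omega : #(S \ T) < r)
  · rw [nodal, nodal, nodal, ← prod_union (disjoint_compl_left.mono_right sdiff_subset)]
    congr 1
    ext
    simp only [mem_union, mem_compl, mem_sdiff, mem_inter]
    tauto

theorem disjoint_nodalSubspace_iff (hx : Function.Injective x) {k t r : ℕ} {S T : Finset α}
    (hS : #S = k) (hT : #T = k) (hr : t + r = k + 1) :
    Disjoint (nodalSubspace x r S) (nodalSubspace x r T) ↔ #(S ∩ T) < t := by
  constructor
  · intro h
    by_contra! hle
    refine nodal_ne_zero (Submodule.disjoint_def.1 h _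
      (nodal_compl_inter_mem_nodalSubspace T hS (by omega) hle) ?_)
    rw [inter_comm] at hle ⊢
    exact nodal_compl_inter_mem_nodalSubspace S hT (by omega) hle
  · intro hlt
    rw [Submodule.disjoint_def]
    rintro _ hp hp'
    obtain ⟨q, hq, rfl⟩ := mem_nodalSubspace.1 hp
    obtain ⟨q', -, hqq'⟩ := mem_nodalSubspace.1 hp'
    suffices q = 0 by simp [this]
    by_contra hq0
    -- `nodal (S \ T)` divides `q`, but its degree `#(S \ T)` is at least `r > deg q`
    have hdvd : nodal (S \ T) x ∣ q := by
      have hcop : IsCoprime (nodal (S \ T) x) (nodal Sᶜ x) :=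
        isCoprime_nodal hx (disjoint_compl_right.mono_left sdiff_subset)
      refine hcop.dvd_of_dvd_mul_left ?_
      rw [← hqq']
      exact (nodal_dvd_nodal x fun a ha => mem_compl.2 (mem_sdiff.1 ha).2).mul_right _
    have h1 := natDegree_le_of_dvd hdvd hq0
    have h2 := (natDegree_lt_iff_degree_lt hq0).2 hq
    have h3 : #(S ∩ T) + #(S \ T) = k := by rw [card_inter_add_card_sdiff, hS]
    rw [natDegree_nodal] at h1
    omega

end NodalSubspace

theorem card_le_choose_of_intersecting_pairs {α : Type*} [Fintype α] [DecidableEq α] {k t : ℕ}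
    (htk : t ≤ k) {ι : Type*} [Fintype ι] (G E : ι → Finset α)
    (hG : ∀ i, #(G i) = k) (hE : ∀ i, #(E i) = k) (hGE : ∀ i j, #(G i ∩ E j) < t ↔ i = j)
    (hGG : ∀ i j, i ≠ j → t ≤ #(G i ∩ G j)) :
    Fintype.card ι ≤ (2 * (k - t) + 1).choose (k - t) := by
  set x : α → ℚ := fun a => (Fintype.equivFin α a : ℕ)
  have hx : Function.Injective x := fun a b h => by simpa [x, Fin.val_inj] using h
  have hdisj := fun {S T : Finset α} (hS : #S = k) (hT : #T = k) =>
    disjoint_nodalSubspace_iff hx (t := t) (r := k - t + 1) hS hT (by omega)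
  have h := two_mul_card_le_choose_of_disjoint_pairs (Nat.succ_pos _)
    (fun i => nodalSubspace x (k - t + 1) (G i)) (fun i => nodalSubspace x (k - t + 1) (E i))
    (fun i => finrank_nodalSubspace _ _) (fun i => finrank_nodalSubspace _ _)
    (fun i j => (hdisj (hG i) (hE j)).trans (hGE i j))
    (fun i j hij => by rw [hdisj (hG i) (hG j)]; exact not_lt.2 (hGG i j hij))
  rw [show k - t + 1 + (k - t + 1) = 2 * (k - t) + 1 + 1 by ring, Nat.choose_succ_succ,
    Nat.choose_symm_half] at h
  omega

theorem two_mul_choose_le_pow (N : ℕ) {i : ℕ} (hi : 2 ≤ i) : 2 * N.choose i ≤ N ^ i :=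
  calc 2 * N.choose i ≤ i.factorial * N.choose i :=
        Nat.mul_le_mul_right _ (hi.trans (Nat.self_le_factorial i))
    _ = N.descFactorial i := (Nat.descFactorial_eq_factorial_mul_choose N i).symm
    _ ≤ N ^ i := Nat.descFactorial_le_pow N i

theorem sum_range_choose_le_pow {N B : ℕ} (hN : 2 ≤ N) (hB : 2 ≤ B) :
    ∑ i ∈ range (B + 1), N.choose i ≤ N ^ B := by
  induction B, hB using Nat.le_induction with
  | base =>
    obtain ⟨m, rfl⟩ := Nat.exists_eq_add_of_le hN
    simp only [sum_range_succ, range_one, sum_singleton, Nat.choose_zero_right,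
      Nat.choose_one_right, Nat.choose_two_right, show 2 + m - 1 = m + 1 by omega]
    have := Nat.div_mul_le_self ((2 + m) * (m + 1)) 2
    nlinarith
  | succ B hB ih =>
    have h1 := two_mul_choose_le_pow N (show 2 ≤ B + 1 by omega)
    have h2 : 2 * N ^ B ≤ N ^ B * N := by rw [mul_comm]; exact Nat.mul_le_mul_left _ hN
    rw [pow_succ] at h1
    rw [sum_range_succ, pow_succ]
    omega

theorem card_le_sum_choose_of_injective {γ β : Type*} [DecidableEq β] {X : Finset β} {B : ℕ}
    (φ : γ → Finset β) (hφ : Function.Injective φ) (hX : ∀ c, φ c ⊆ X)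
    (hB : ∀ c, #(φ c) ≤ B) :
    Nat.card γ ≤ ∑ i ∈ range (B + 1), (#X).choose i := by
  let small := (range (B + 1)).biUnion fun i => powersetCard i X
  have hsmall (c) : φ c ∈ small :=
    mem_biUnion.2 ⟨_, mem_range.2 (Nat.lt_succ_of_le (hB c)),
      mem_powersetCard.2 ⟨hX c, rfl⟩⟩
  calc Nat.card γ ≤ #small :=
        (Nat.card_le_card_of_injective (fun c => (⟨φ c, hsmall c⟩ : small))
          fun _ _ h => hφ (Subtype.mk.inj h)).trans (Nat.card_eq_finsetCard small).le
    _ ≤ ∑ i ∈ range (B + 1), #(powersetCard i X) := card_biUnion_le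
    _ = ∑ i ∈ range (B + 1), (#X).choose i := by simp only [card_powersetCard]

section Intersectors

variable {α : Type*} [Fintype α] [DecidableEq α]

def tIntersectors (k t : ℕ) (S : Finset (Finset α)) : Finset (Finset α) :=
  (univ.powersetCard k).filter fun e => ∀ f ∈ S, t ≤ #(e ∩ f)

variable {k t : ℕ}

theorem mem_tIntersectors {S : Finset (Finset α)} {e : Finset α} :
    e ∈ tIntersectors k t S ↔ #e = k ∧ ∀ f ∈ S, t ≤ #(e ∩ f) := by
  simp [tIntersectors]

theorem tIntersectors_anti : Antitone (tIntersectors (α := α) k t) := fun _ _ h _ he =>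
  mem_tIntersectors.2 ⟨(mem_tIntersectors.1 he).1,
    fun f hf => (mem_tIntersectors.1 he).2 f (h hf)⟩

theorem exists_witness_of_tIntersectors_erase_ne {S H : Finset (Finset α)} {g : Finset α}
    (hSH : tIntersectors k t S = H) (hne : tIntersectors k t (S.erase g) ≠ H) :
    ∃ e, #e = k ∧ #(g ∩ e) < t ∧ ∀ f ∈ S, f ≠ g → t ≤ #(f ∩ e) := by
  obtain ⟨e, he, heH⟩ := not_subset.1 fun hsub =>
    hne (hsub.antisymm (hSH ▸ tIntersectors_anti (erase_subset g S)))
  rw [mem_tIntersectors] at he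
  rw [← hSH, mem_tIntersectors] at heH
  refine ⟨e, he.1, ?_, fun f hf hfg => inter_comm e f ▸ he.2 f (mem_erase.2 ⟨hfg, hf⟩)⟩
  by_contra! hge
  refine heH ⟨he.1, fun f hf => ?_⟩
  rcases eq_or_ne f g with rfl | hfg
  · rwa [inter_comm]
  · exact he.2 f (mem_erase.2 ⟨hfg, hf⟩)

end Intersectors

namespace IsMaximalTIntersectingHyp

variable {n k t : ℕ} {H : Finset (Finset (Fin n))}

theorem tIntersectors_eq (htk : t ≤ k) (hH : IsMaximalTIntersectingHyp n k t H) :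
    tIntersectors k t H = H := by
  refine Subset.antisymm (fun e he => ?_) fun e he =>
    mem_tIntersectors.2 ⟨hH.1 e he, hH.2.1 e he⟩
  rw [mem_tIntersectors] at he
  have hunif : IsKUniform n k (insert e H) := fun f hf => by
    rcases mem_insert.1 hf with rfl | hf
    exacts [he.1, hH.1 f hf]
  have hint : IsTIntersectingHyp n t (insert e H) := fun a ha b hb => by
    rcases mem_insert.1 ha with rfl | ha' <;> rcases mem_insert.1 hb with rfl | hb'
    · rwa [inter_self, he.1]
    · exact he.2 b hb'
    · rw [inter_comm]; exact he.2 a ha'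
    · exact hH.2.1 a ha' b hb'
  rw [hH.2.2 _ hunif hint (subset_insert e H)]
  exact mem_insert_self e H

theorem exists_small_generator (htk : t ≤ k) (hH : IsMaximalTIntersectingHyp n k t H) :
    ∃ S ⊆ H, tIntersectors k t S = H ∧ #S ≤ (2 * (k - t) + 1).choose (k - t) := by
  obtain ⟨S, hS, hmin⟩ := exists_min_image (H.powerset.filter fun S => tIntersectors k t S = H)
    card ⟨H, mem_filter.2 ⟨mem_powerset_self H, hH.tIntersectors_eq htk⟩⟩
  rw [mem_filter, mem_powerset] at hS
  refine ⟨S, hS.1, hS.2, ?_⟩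
  have hwit (g : S) := exists_witness_of_tIntersectors_erase_ne (g := g.1) hS.2 fun h =>
    (card_erase_lt_of_mem g.2).not_ge
      (hmin _ (mem_filter.2 ⟨mem_powerset.2 ((erase_subset _ _).trans hS.1), h⟩))
  choose e he hge hfe using hwit
  simpa using card_le_choose_of_intersecting_pairs htk (fun g : S => g.1) e
    (fun g => hH.1 g (hS.1 g.2)) he
    (fun i j => ⟨fun h => by_contra fun hij => (hfe j i i.2 (Subtype.coe_ne_coe.2 hij)).not_gt h,
      by rintro rfl; exact hge i⟩)
    (fun i j _ => hH.2.1 i (hS.1 i.2) j (hS.1 j.2))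

end IsMaximalTIntersectingHyp

theorem number_of_maximal_t_intersecting_hypergraphs_general
    (n k t : ℕ) (htk : t < k) (hkn : k < n) :
    Nat.card {H : Finset (Finset (Fin n)) // IsMaximalTIntersectingHyp n k t H} ≤
      ∑ i ∈ Finset.range ((2 * (k - t) + 1).choose (k - t) + 1), (n.choose k).choose i ∧
    ∑ i ∈ Finset.range ((2 * (k - t) + 1).choose (k - t) + 1), (n.choose k).choose i ≤
      (n.choose k) ^ ((2 * (k - t) + 1).choose (k - t)) := by
  set B := (2 * (k - t) + 1).choose (k - t)
  refine ⟨?_, sum_range_choose_le_pow ?_ ?_⟩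
  · choose S hSH hSeq hScard using fun H : {H // IsMaximalTIntersectingHyp n k t H} =>
      H.2.exists_small_generator htk.le
    simpa [card_powersetCard] using card_le_sum_choose_of_injective (X := univ.powersetCard k) S
      (fun H₁ H₂ h => Subtype.ext (by rw [← hSeq H₁, ← hSeq H₂, h]))
      (fun H e he => mem_powersetCard_univ.2 (H.2.1 e (hSH H he))) hScard
  · calc 2 ≤ k + 1 := by omega
      _ = (k + 1).choose k := (Nat.choose_succ_self_right k).symm
      _ ≤ n.choose k := Nat.choose_le_choose k hkn
  · calc 2 ≤ k - t + 1 := by omega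
      _ = (k - t + 1).choose (k - t) := (Nat.choose_succ_self_right _).symm
      _ ≤ B := Nat.choose_le_choose _ (by omega)

theorem number_of_maximal_t_intersecting_hypergraphs
    (n k t : ℕ) (ht : 1 ≤ t) (htk : t < k) (hkn : k < n) :
    Nat.card {H : Finset (Finset (Fin n)) // IsMaximalTIntersectingHyp n k t H} ≤
      ∑ i ∈ Finset.range ((2 * (k - t) + 1).choose (k - t) + 1), (n.choose k).choose i ∧
    ∑ i ∈ Finset.range ((2 * (k - t) + 1).choose (k - t) + 1), (n.choose k).choose i ≤
      (n.choose k) ^ ((2 * (k - t) + 1).choose (k - t)) :=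
  number_of_maximal_t_intersecting_hypergraphs_general n k t htk hkn
end
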